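/- Let f : [0,1] → E¹ be a continuous fuzzy-number-valued function. For a positive integer n and 0 < δ < 1/(2n), let φ_0, ..., φ_n be the trapezoidal partition of unity on [0,1] associated with nodes a_j = j/n, and define T^f_{n,δ}(x) = ∑_{j=0}^{n} φ_j(x) · f(j/n) (levelwise convex combination of fuzzy numbers). Then sup_{x∈[0,1]} d_∞(f(x), T^f_{n,δ}(x)) ≤ 3 ω^F(f, 1/n). -/
import Mathlib


open Set Finset

/-- Hausdorff distance between two compact intervals given by their endpoints. -/
noncomputable def dH (A B : ℝ × ℝ) : ℝ := max |A.1 - B.1| |A.2 - B.2|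

/-- Supremum metric on fuzzy numbers, represented by their `α`-cut endpoint maps. -/
noncomputable def dInfty (u v : ℝ → ℝ × ℝ) : ℝ :=
  sSup {r | ∃ α ∈ Icc (0:ℝ) 1, r = dH (u α) (v α)}

/-- Fuzzy modulus of continuity of `f : [0,1] → E¹` (cuts: `f x α`). -/
noncomputable def modF (f : ℝ → ℝ → ℝ × ℝ) (δ : ℝ) : ℝ :=
  sSup {r | ∃ x ∈ Icc (0:ℝ) 1, ∃ y ∈ Icc (0:ℝ) 1, |x - y| < δ ∧ r = dInfty (f x) (f y)}

lemma dH_nonneg (A B : ℝ × ℝ) : 0 ≤ dH A B :=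
  le_trans (abs_nonneg _) (le_max_left _ _)

lemma dH_comm (A B : ℝ × ℝ) : dH A B = dH B A := by
  simp [dH, abs_sub_comm]

lemma dH_tri (A B C : ℝ × ℝ) : dH A C ≤ dH A B + dH B C := by
  unfold dH
  apply max_le
  · calc |A.1 - C.1| ≤ |A.1 - B.1| + |B.1 - C.1| := abs_sub_le _ _ _
      _ ≤ _ := add_le_add (le_max_left _ _) (le_max_left _ _)
  · calc |A.2 - C.2| ≤ |A.2 - B.2| + |B.2 - C.2| := abs_sub_le _ _ _
      _ ≤ _ := add_le_add (le_max_right _ _) (le_max_right _ _)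

lemma dInfty_comm (u v : ℝ → ℝ × ℝ) : dInfty u v = dInfty v u := by
  unfold dInfty
  congr 1
  ext r
  constructor <;> rintro ⟨α, hα, rfl⟩ <;> exact ⟨α, hα, dH_comm _ _⟩

lemma abs_sub_le_dH_fst (A B : ℝ × ℝ) : |A.1 - B.1| ≤ dH A B := le_max_left _ _
lemma abs_sub_le_dH_snd (A B : ℝ × ℝ) : |A.2 - B.2| ≤ dH A B := le_max_right _ _

/-- Theorem 3.12: for any continuous fuzzy-valued `f` on `[0,1]`,
`D(f, T^f_{n,δ}) ≤ 3 ω^F(f, 1/n)`, where `T^f_{n,δ}(x) = ∑_j φ_j(x)·f(j/n)` is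
built from the trapezoidal partition of unity. -/
theorem fuzzy_trapezoidal_approximation (f : ℝ → ℝ → ℝ × ℝ)
    (hval : ∀ x ∈ Icc (0:ℝ) 1, ∀ α ∈ Icc (0:ℝ) 1, (f x α).1 ≤ (f x α).2)
    (hnest : ∀ x ∈ Icc (0:ℝ) 1, ∀ α ∈ Icc (0:ℝ) 1, ∀ β ∈ Icc (0:ℝ) 1, α ≤ β →
      (f x α).1 ≤ (f x β).1 ∧ (f x β).2 ≤ (f x α).2)
    (hcont : ∀ ε > (0:ℝ), ∀ x ∈ Icc (0:ℝ) 1, ∃ η > (0:ℝ),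
      ∀ y ∈ Icc (0:ℝ) 1, |x - y| < η → dInfty (f x) (f y) < ε)
    (n : ℕ) (hn : 0 < n) (δ : ℝ) (hδ0 : 0 < δ) (hδ : δ < 1 / (2 * n))
    (φ : ℕ → ℝ → ℝ)
    (hφc : ∀ j ≤ n, ContinuousOn (φ j) (Icc 0 1))
    (hφrange : ∀ j ≤ n, ∀ x ∈ Icc (0:ℝ) 1, φ j x ∈ Icc (0:ℝ) 1)
    (hφsum : ∀ x ∈ Icc (0:ℝ) 1, ∑ j ∈ Finset.range (n + 1), φ j x = 1)
    (hφloc : ∀ x ∈ Icc (0:ℝ) 1, ∃ k ≤ n,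
      (∀ j ≤ n, j ≠ k → j ≠ k + 1 → φ j x = 0) ∧
      |x - (k : ℝ) / n| < 1 / n ∧
      (φ (k + 1) x ≠ 0 → |x - ((k : ℝ) + 1) / n| < 2 / n)) :
    ∀ x ∈ Icc (0:ℝ) 1,
      dInfty (f x)
        (fun α => (∑ j ∈ Finset.range (n + 1), φ j x * (f ((j : ℝ) / n) α).1,
                   ∑ j ∈ Finset.range (n + 1), φ j x * (f ((j : ℝ) / n) α).2))
      ≤ 3 * modF f (1 / n) := by
  have h0 : (0:ℝ) ∈ Icc (0:ℝ) 1 := ⟨le_refl 0, zero_le_one⟩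
  have hnR : (0:ℝ) < (n:ℝ) := by exact_mod_cast hn
  have hninv : (0:ℝ) < 1 / n := by positivity
  -- all α-cut endpoints lie between the 0-cut endpoints
  have hcut : ∀ x ∈ Icc (0:ℝ) 1, ∀ α ∈ Icc (0:ℝ) 1,
      (f x 0).1 ≤ (f x α).1 ∧ (f x α).1 ≤ (f x α).2 ∧ (f x α).2 ≤ (f x 0).2 := by
    intro x hx α hα
    obtain ⟨h1, h2⟩ := hnest x hx 0 h0 α hα hα.1
    exact ⟨h1, hval x hx α hα, h2⟩
  have habs : ∀ x ∈ Icc (0:ℝ) 1, ∀ α ∈ Icc (0:ℝ) 1,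
      |(f x α).1| ≤ |(f x 0).1| + |(f x 0).2| ∧
      |(f x α).2| ≤ |(f x 0).1| + |(f x 0).2| := by
    intro x hx α hα
    obtain ⟨h1, h2, h3⟩ := hcut x hx α hα
    have e1 := neg_abs_le (f x 0).1
    have e2 := le_abs_self (f x 0).2
    have e3 := abs_nonneg (f x 0).1
    have e4 := abs_nonneg (f x 0).2
    constructor <;> rw [abs_le] <;> constructor <;> linarith
  -- each pairwise dInfty set is bounded above
  have hBdd : ∀ x ∈ Icc (0:ℝ) 1, ∀ y ∈ Icc (0:ℝ) 1,
      BddAbove {r | ∃ α ∈ Icc (0:ℝ) 1, r = dH (f x α) (f y α)} := by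
    intro x hx y hy
    refine ⟨(|(f x 0).1| + |(f x 0).2|) + (|(f y 0).1| + |(f y 0).2|), ?_⟩
    rintro r ⟨α, hα, rfl⟩
    obtain ⟨hx1, hx2⟩ := habs x hx α hα
    obtain ⟨hy1, hy2⟩ := habs y hy α hα
    apply max_le
    · calc |(f x α).1 - (f y α).1| ≤ |(f x α).1| + |(f y α).1| := abs_sub _ _
        _ ≤ _ := by linarith
    · calc |(f x α).2 - (f y α).2| ≤ |(f x α).2| + |(f y α).2| := abs_sub _ _
        _ ≤ _ := by linarith
  have hdle : ∀ x ∈ Icc (0:ℝ) 1, ∀ y ∈ Icc (0:ℝ) 1, ∀ α ∈ Icc (0:ℝ) 1,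
      dH (f x α) (f y α) ≤ dInfty (f x) (f y) := by
    intro x hx y hy α hα
    exact le_csSup (hBdd x hx y hy) ⟨α, hα, rfl⟩
  have hnonneg : ∀ x ∈ Icc (0:ℝ) 1, ∀ y ∈ Icc (0:ℝ) 1, 0 ≤ dInfty (f x) (f y) := by
    intro x hx y hy
    exact le_trans (dH_nonneg _ _) (hdle x hx y hy 0 h0)
  have htri : ∀ x ∈ Icc (0:ℝ) 1, ∀ y ∈ Icc (0:ℝ) 1, ∀ z ∈ Icc (0:ℝ) 1,
      dInfty (f x) (f z) ≤ dInfty (f x) (f y) + dInfty (f y) (f z) := by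
    intro x hx y hy z hz
    apply Real.sSup_le
    · rintro r ⟨α, hα, rfl⟩
      calc dH (f x α) (f z α) ≤ dH (f x α) (f y α) + dH (f y α) (f z α) := dH_tri _ _ _
        _ ≤ _ := add_le_add (hdle x hx y hy α hα) (hdle y hy z hz α hα)
    · exact add_nonneg (hnonneg x hx y hy) (hnonneg y hy z hz)
  -- uniform bound on dInfty from compactness and continuity
  choose η hη hball using fun c : Icc (0:ℝ) 1 => hcont 1 one_pos c c.2
  have hcover : Icc (0:ℝ) 1 ⊆ ⋃ c : Icc (0:ℝ) 1, Metric.ball (c:ℝ) (η c) := by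
    intro y hy
    exact Set.mem_iUnion.mpr ⟨⟨y, hy⟩, by simpa [Metric.mem_ball] using hη ⟨y, hy⟩⟩
  obtain ⟨t, ht⟩ := isCompact_Icc.elim_finite_subcover
    (fun c : Icc (0:ℝ) 1 => Metric.ball (c:ℝ) (η c)) (fun c => Metric.isOpen_ball) hcover
  set M : ℝ := ∑ c ∈ t, dInfty (f 0) (f (c:ℝ)) with hM
  have hg : ∀ y ∈ Icc (0:ℝ) 1, dInfty (f 0) (f y) ≤ M + 1 := by
    intro y hy
    obtain ⟨c, hc, hyc⟩ := Set.mem_iUnion₂.mp (ht hy)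
    have hdist : |(c:ℝ) - y| < η c := by
      rw [Metric.mem_ball, Real.dist_eq] at hyc
      rwa [abs_sub_comm]
    have h1 : dInfty (f (c:ℝ)) (f y) < 1 := hball c y hy hdist
    have h2 : dInfty (f 0) (f (c:ℝ)) ≤ M := by
      apply Finset.single_le_sum (f := fun c : ↑(Icc (0:ℝ) 1) => dInfty (f 0) (f (c:ℝ)))
        ?_ hc
      intro c' _
      exact hnonneg 0 h0 (c':ℝ) c'.2
    calc dInfty (f 0) (f y) ≤ dInfty (f 0) (f (c:ℝ)) + dInfty (f (c:ℝ)) (f y) :=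
          htri 0 h0 (c:ℝ) c.2 y hy
      _ ≤ M + 1 := by linarith
  have hmodBdd : BddAbove {r | ∃ x ∈ Icc (0:ℝ) 1, ∃ y ∈ Icc (0:ℝ) 1,
      |x - y| < 1 / n ∧ r = dInfty (f x) (f y)} := by
    refine ⟨(M + 1) + (M + 1), ?_⟩
    rintro r ⟨x, hx, y, hy, _, rfl⟩
    calc dInfty (f x) (f y) ≤ dInfty (f x) (f 0) + dInfty (f 0) (f y) := htri x hx 0 h0 y hy
      _ = dInfty (f 0) (f x) + dInfty (f 0) (f y) := by rw [dInfty_comm]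
      _ ≤ (M + 1) + (M + 1) := add_le_add (hg x hx) (hg y hy)
  have hkey : ∀ x ∈ Icc (0:ℝ) 1, ∀ y ∈ Icc (0:ℝ) 1, |x - y| < 1 / n →
      dInfty (f x) (f y) ≤ modF f (1 / n) := by
    intro x hx y hy hxy
    exact le_csSup hmodBdd ⟨x, hx, y, hy, hxy, rfl⟩
  have hmod_nonneg : 0 ≤ modF f (1 / n) := by
    refine le_trans (hnonneg 0 h0 0 h0) (hkey 0 h0 0 h0 ?_)
    simpa using hninv
  -- main estimate
  intro x hx
  obtain ⟨k, hk, hzero, hknear, hk1near⟩ := hφloc x hx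
  have hφnn : ∀ j ∈ Finset.range (n + 1), 0 ≤ φ j x := by
    intro j hj
    exact (hφrange j (Nat.lt_succ_iff.mp (Finset.mem_range.mp hj)) x hx).1
  -- each node with nonzero weight is dInfty-close to x
  have hjd : ∀ j ∈ Finset.range (n + 1), φ j x ≠ 0 →
      dInfty (f x) (f ((j:ℝ)/n)) ≤ 2 * modF f (1 / n) := by
    intro j hj hφj
    have hjn : j ≤ n := Nat.lt_succ_iff.mp (Finset.mem_range.mp hj)
    have hjmem : (j:ℝ)/n ∈ Icc (0:ℝ) 1 := by
      constructor
      · positivity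
      · rw [div_le_one hnR]; exact_mod_cast hjn
    by_cases hjk : j = k
    · subst hjk
      have := hkey x hx ((j:ℝ)/n) hjmem hknear
      linarith [hmod_nonneg]
    · by_cases hjk1 : j = k + 1
      · have hφk1 : φ (k + 1) x ≠ 0 := by rwa [hjk1] at hφj
        have hnear := hk1near hφk1
        have hjcast : (j:ℝ)/n = ((k:ℝ) + 1)/n := by
          rw [hjk1]; push_cast; ring
        rw [hjcast] at hjmem ⊢
        set z : ℝ := ((k:ℝ) + 1)/n with hz
        set y : ℝ := (x + z)/2 with hy
        have hymem : y ∈ Icc (0:ℝ) 1 := by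
          constructor
          · have := hx.1; have := hjmem.1; rw [hy]; linarith
          · have := hx.2; have := hjmem.2; rw [hy]; linarith
        have h2n : (2:ℝ)/n = 2*(1/n) := by ring
        have hxy : |x - y| < 1 / n := by
          have : x - y = (x - z)/2 := by rw [hy]; ring
          rw [this, abs_div]
          rw [show |(2:ℝ)| = 2 by norm_num]
          linarith [hnear]
        have hyz : |y - z| < 1 / n := by
          have : y - z = (x - z)/2 := by rw [hy]; ring
          rw [this, abs_div]
          rw [show |(2:ℝ)| = 2 by norm_num]
          linarith [hnear]
        calc dInfty (f x) (f z) ≤ dInfty (f x) (f y) + dInfty (f y) (f z) :=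
              htri x hx y hymem z hjmem
          _ ≤ modF f (1/n) + modF f (1/n) :=
              add_le_add (hkey x hx y hymem hxy) (hkey y hymem z hjmem hyz)
          _ = 2 * modF f (1/n) := by ring
      · exact absurd (hzero j hjn hjk hjk1) hφj
  -- componentwise bound
  have hcompbound : ∀ (g : ℝ × ℝ → ℝ), (∀ A B, |g A - g B| ≤ dH A B) →
      ∀ α ∈ Icc (0:ℝ) 1,
      |g (f x α) - ∑ j ∈ Finset.range (n + 1), φ j x * g (f ((j:ℝ)/n) α)| ≤
        3 * modF f (1 / n) := by
    intro g hg α hα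
    have hrw : g (f x α) - ∑ j ∈ Finset.range (n + 1), φ j x * g (f ((j:ℝ)/n) α)
        = ∑ j ∈ Finset.range (n + 1), φ j x * (g (f x α) - g (f ((j:ℝ)/n) α)) := by
      rw [Finset.sum_congr rfl (fun j _ => mul_sub (φ j x) _ _), Finset.sum_sub_distrib,
        ← Finset.sum_mul, hφsum x hx, one_mul]
    rw [hrw]
    calc |∑ j ∈ Finset.range (n + 1), φ j x * (g (f x α) - g (f ((j:ℝ)/n) α))|
        ≤ ∑ j ∈ Finset.range (n + 1), |φ j x * (g (f x α) - g (f ((j:ℝ)/n) α))| :=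
          Finset.abs_sum_le_sum_abs _ _
      _ ≤ ∑ j ∈ Finset.range (n + 1), φ j x * (3 * modF f (1 / n)) := by
          apply Finset.sum_le_sum
          intro j hj
          rw [abs_mul, abs_of_nonneg (hφnn j hj)]
          by_cases hφj : φ j x = 0
          · simp [hφj]
          · apply mul_le_mul_of_nonneg_left _ (hφnn j hj)
            have hjn : j ≤ n := Nat.lt_succ_iff.mp (Finset.mem_range.mp hj)
            have hjmem : (j:ℝ)/n ∈ Icc (0:ℝ) 1 := by
              constructor
              · positivity
              · rw [div_le_one hnR]; exact_mod_cast hjn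
            calc |g (f x α) - g (f ((j:ℝ)/n) α)| ≤ dH (f x α) (f ((j:ℝ)/n) α) := hg _ _
              _ ≤ dInfty (f x) (f ((j:ℝ)/n)) := hdle x hx ((j:ℝ)/n) hjmem α hα
              _ ≤ 2 * modF f (1 / n) := hjd j hj hφj
              _ ≤ 3 * modF f (1 / n) := by linarith [hmod_nonneg]
      _ = 3 * modF f (1 / n) := by rw [← Finset.sum_mul, hφsum x hx, one_mul]
  apply Real.sSup_le
  · rintro r ⟨α, hα, rfl⟩
    apply max_le
    · exact hcompbound Prod.fst (fun A B => abs_sub_le_dH_fst A B) α hα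
    · exact hcompbound Prod.snd (fun A B => abs_sub_le_dH_snd A B) α hα
  · linarith [hmod_nonneg]
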